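/- arXiv:1503.04512 — 2 statements merged into one kernel-verified Lean document; each statement's English description precedes it below -/
import Mathlib

section
/- Let p, q, s and φ be as in the definition of the variable Besov-type space, with p₊ < ∞ and q₊ < ∞. Then the following embeddings hold: B^{s(·),φ}_{p(·),min{p(·),q(·)}}(ℝⁿ) ↪ F^{s(·),φ}_{p(·),q(·)}(ℝⁿ) ↪ B^{s(·),φ}_{p(·),max{p(·),q(·)}}(ℝⁿ). In particular, if p₊ < ∞ then B^{s(·),φ}_{p(·),p(·)}(ℝⁿ) = F^{s(·),φ}_{p(·),p(·)}(ℝⁿ) with equivalent quasi-norms. -/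
open MeasureTheory Real FourierTransform
open scoped ENNReal BigOperators Classical

noncomputable section

/-- The dyadic cube `Q_{jk} = 2^{−j}([0,1)ⁿ + k)` in `ℝⁿ`. -/
def dyadicCube {n : ℕ} (j : ℤ) (k : Fin n → ℤ) : Set (EuclideanSpace ℝ (Fin n)) :=
  {x | ∀ i, (2 : ℝ) ^ (-j) * (k i : ℝ) ≤ x i ∧ x i < (2 : ℝ) ^ (-j) * ((k i : ℝ) + 1)}

/-- The lower-left corner `2^{−j} k` of the dyadic cube `Q_{jk}`. -/
def dyadicCorner {n : ℕ} (j : ℤ) (k : Fin n → ℤ) : EuclideanSpace ℝ (Fin n) :=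
  WithLp.toLp 2 (fun i => (2 : ℝ) ^ (-j) * (k i : ℝ))

/-- The variable-exponent modular (real-valued exponent, `ℝ≥0∞`-valued function). -/
def varModularR {n : ℕ} (p : EuclideanSpace ℝ (Fin n) → ℝ)
    (f : EuclideanSpace ℝ (Fin n) → ℝ≥0∞) : ℝ≥0∞ :=
  ∫⁻ x, f x ^ p x

/-- The variable-exponent Lebesgue (Luxemburg) quasi-norm. -/
def varNormR {n : ℕ} (p : EuclideanSpace ℝ (Fin n) → ℝ)
    (f : EuclideanSpace ℝ (Fin n) → ℝ≥0∞) : ℝ≥0∞ :=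
  sInf {lam : ℝ≥0∞ | 0 < lam ∧ varModularR p (fun x => f x / lam) ≤ 1}

/-- The inner infimum of the mixed Lebesgue-sequence semimodular. -/
def mixedInnerR {n : ℕ} (p q : EuclideanSpace ℝ (Fin n) → ℝ)
    (g : EuclideanSpace ℝ (Fin n) → ℝ≥0∞) : ℝ≥0∞ :=
  sInf {mu : ℝ≥0∞ | 0 < mu ∧
    varModularR p (fun x => g x / mu ^ (1 / q x)) ≤ 1}

/-- The mixed Lebesgue-sequence semimodular `ϱ_{ℓ^{q(·)}(L^{p(·)})}`. -/
def mixedModularR {n : ℕ} (p q : EuclideanSpace ℝ (Fin n) → ℝ)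
    (g : ℕ → EuclideanSpace ℝ (Fin n) → ℝ≥0∞) : ℝ≥0∞ :=
  ∑' v, mixedInnerR p q (g v)

/-- The mixed Lebesgue-sequence quasi-norm `‖·‖_{ℓ^{q(·)}(L^{p(·)})}`. -/
def mixedNormR {n : ℕ} (p q : EuclideanSpace ℝ (Fin n) → ℝ)
    (g : ℕ → EuclideanSpace ℝ (Fin n) → ℝ≥0∞) : ℝ≥0∞ :=
  sInf {lam : ℝ≥0∞ | 0 < lam ∧ mixedModularR p q (fun v x => g v x / lam) ≤ 1}

/-- Local log-Hölder continuity with constant `C`. -/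
def LocLogHolderWith {n : ℕ} (C : ℝ) (g : EuclideanSpace ℝ (Fin n) → ℝ) : Prop :=
  ∀ x y : EuclideanSpace ℝ (Fin n), x ≠ y →
    |g x - g y| ≤ C / Real.log (Real.exp 1 + 1 / dist x y)

/-- Global log-Hölder continuity. -/
def GlobLogHolder {n : ℕ} (g : EuclideanSpace ℝ (Fin n) → ℝ) : Prop :=
  (∃ C : ℝ, 0 < C ∧ LocLogHolderWith C g) ∧
    ∃ Cinf : ℝ, 0 < Cinf ∧ ∃ ginf : ℝ,
      ∀ x : EuclideanSpace ℝ (Fin n), |g x - ginf| ≤ Cinf / Real.log (Real.exp 1 + ‖x‖)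

/-- `φ ∈ 𝒢(ℝⁿ×[0,∞))`: positivity, doubling (constant `c₁`) and compatibility
(constant `c₂`). -/
def IsGWeight {n : ℕ} (φ : EuclideanSpace ℝ (Fin n) → ℝ → ℝ) (c₁ c₂ : ℝ) : Prop :=
  1 ≤ c₁ ∧ 1 ≤ c₂ ∧ (∀ x r, 0 < r → 0 < φ x r) ∧
    (∀ x r, 0 < r → c₁⁻¹ * φ x (2 * r) ≤ φ x r ∧ φ x r ≤ c₁ * φ x (2 * r)) ∧
    (∀ x y : EuclideanSpace ℝ (Fin n), ∀ r, 0 < r → dist x y ≤ r →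
      c₂⁻¹ * φ y r ≤ φ x r ∧ φ x r ≤ c₂ * φ y r)

/-- The value `φ(P)` of a weight on the dyadic cube `P = Q_{JK}`. -/
def weightOn {n : ℕ} (φ : EuclideanSpace ℝ (Fin n) → ℝ → ℝ)
    (J : ℤ) (K : Fin n → ℤ) : ℝ :=
  φ (dyadicCorner J K) ((2 : ℝ) ^ (-J))

/-- The `j`-th level function of the sequence space `b^{s(·),φ}_{p(·),q(·)}`
localized to the dyadic cube `P = Q_{JK}`: `Σ_{Q ⊂ P, ℓ(Q)=2^{−ℓ}}
|Q|^{−s(·)/n} |t_Q| |Q|^{−1/2} χ_Q = Σ 2^{ℓ(s(·)+n/2)} |t_Q| χ_Q`. -/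
def seqLevelFn {n : ℕ} (s : EuclideanSpace ℝ (Fin n) → ℝ)
    (t : ℕ → (Fin n → ℤ) → ℝ≥0∞) (J : ℤ) (K : Fin n → ℤ) (ℓ : ℕ) :
    EuclideanSpace ℝ (Fin n) → ℝ≥0∞ :=
  Set.indicator (dyadicCube J K) (fun x =>
    ∑' k : Fin n → ℤ,
      if x ∈ dyadicCube (ℓ : ℤ) k ∧ dyadicCube (ℓ : ℤ) k ⊆ dyadicCube J K then
        ENNReal.ofReal ((2 : ℝ) ^ ((ℓ : ℝ) * (s x + n / 2))) * t ℓ k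
      else 0)

/-- The norm of the Besov-type sequence space `b^{s(·),φ}_{p(·),q(·)}(ℝⁿ)`:
sequences are indexed by dyadic cubes of side length `≤ 1`, encoded as pairs
`(ℓ, k)` with level `ℓ ∈ ℕ` (side length `2^{−ℓ}`) and corner `k ∈ ℤⁿ`. -/
def seqBesovNorm {n : ℕ} (p q s : EuclideanSpace ℝ (Fin n) → ℝ)
    (φ : EuclideanSpace ℝ (Fin n) → ℝ → ℝ)
    (t : ℕ → (Fin n → ℤ) → ℝ≥0∞) : ℝ≥0∞ :=
  ⨆ (J : ℤ) (K : Fin n → ℤ),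
    (ENNReal.ofReal (weightOn φ J K))⁻¹ *
      mixedNormR p q (fun m => seqLevelFn s t J K ((max J 0).toNat + m))

/-- The norm of the Besov-type sequence space `b^{s(·),φ}_{p(·),∞}(ℝⁿ)`. -/
def seqBesovNormInf {n : ℕ} (p s : EuclideanSpace ℝ (Fin n) → ℝ)
    (φ : EuclideanSpace ℝ (Fin n) → ℝ → ℝ)
    (t : ℕ → (Fin n → ℤ) → ℝ≥0∞) : ℝ≥0∞ :=
  ⨆ (J : ℤ) (K : Fin n → ℤ),
    (ENNReal.ofReal (weightOn φ J K))⁻¹ *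
      ⨆ m : ℕ, varNormR p (seqLevelFn s t J K ((max J 0).toNat + m))

/-- An admissible pair `(φ, Φ)` of Schwartz functions in the sense of Frazier–Jawerth:
`supp φ̂ ⊂ {1/2 ≤ |ξ| ≤ 2}` with `|φ̂(ξ)| ≥ c > 0` on `{3/5 ≤ |ξ| ≤ 5/3}`, and
`supp Φ̂ ⊂ {|ξ| ≤ 2}` with `|Φ̂(ξ)| ≥ c > 0` on `{|ξ| ≤ 5/3}`. -/
def AdmissiblePair {n : ℕ} (φ₀ Φ : SchwartzMap (EuclideanSpace ℝ (Fin n)) ℂ) : Prop :=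
  ∃ c : ℝ, 0 < c ∧
    (∀ ξ : EuclideanSpace ℝ (Fin n), 𝓕 (⇑φ₀) ξ ≠ 0 → 1 / 2 ≤ ‖ξ‖ ∧ ‖ξ‖ ≤ 2) ∧
    (∀ ξ : EuclideanSpace ℝ (Fin n), 3 / 5 ≤ ‖ξ‖ → ‖ξ‖ ≤ 5 / 3 → c ≤ ‖𝓕 (⇑φ₀) ξ‖) ∧
    (∀ ξ : EuclideanSpace ℝ (Fin n), 𝓕 (⇑Φ) ξ ≠ 0 → ‖ξ‖ ≤ 2) ∧
    (∀ ξ : EuclideanSpace ℝ (Fin n), ‖ξ‖ ≤ 5 / 3 → c ≤ ‖𝓕 (⇑Φ) ξ‖)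

/-- The Littlewood–Paley family: `φ_0 = Φ` and `φ_ℓ(x) = 2^{ℓn} φ(2^ℓ x)` for `ℓ ≥ 1`. -/
def lpFamily {n : ℕ} (φ₀ Φ : SchwartzMap (EuclideanSpace ℝ (Fin n)) ℂ) (ℓ : ℕ) :
    EuclideanSpace ℝ (Fin n) → ℂ :=
  fun x => if ℓ = 0 then Φ x else (2 : ℂ) ^ (ℓ * n) * φ₀ ((2 : ℝ) ^ ℓ • x)

/-- The family of magnitudes of the convolutions `|φ_ℓ ∗ f|`. -/
def lpConvFamily {n : ℕ} (φ₀ Φ : SchwartzMap (EuclideanSpace ℝ (Fin n)) ℂ)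
    (f : EuclideanSpace ℝ (Fin n) → ℂ) (ℓ : ℕ) (x : EuclideanSpace ℝ (Fin n)) : ℝ≥0∞ :=
  (‖∫ y, lpFamily φ₀ Φ ℓ y * f (x - y)‖₊ : ℝ≥0∞)

/-- The Besov-type norm `‖f‖_{B^{s(·),φ}_{p(·),q(·)}}` of a family
`u = (|φ_ℓ ∗ f|)_ℓ`: `sup_P φ(P)⁻¹ ‖{2^{js(·)} u_j χ_P}_{j ≥ max(j_P,0)}‖_{ℓ^{q(·)}(L^{p(·)})}`. -/
def besovNormFam {n : ℕ} (p q s : EuclideanSpace ℝ (Fin n) → ℝ)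
    (φ : EuclideanSpace ℝ (Fin n) → ℝ → ℝ)
    (u : ℕ → EuclideanSpace ℝ (Fin n) → ℝ≥0∞) : ℝ≥0∞ :=
  ⨆ (J : ℤ) (K : Fin n → ℤ),
    (ENNReal.ofReal (weightOn φ J K))⁻¹ *
      mixedNormR p q (fun m =>
        Set.indicator (dyadicCube J K) (fun x =>
          ENNReal.ofReal ((2 : ℝ) ^ ((((max J 0).toNat + m : ℕ) : ℝ) * s x)) *
            u ((max J 0).toNat + m) x))

/-- The Triebel–Lizorkin-type norm `‖f‖_{F^{s(·),φ}_{p(·),q(·)}}` of a family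
`u = (|φ_ℓ ∗ f|)_ℓ`. -/
def tlNormFam {n : ℕ} (p q s : EuclideanSpace ℝ (Fin n) → ℝ)
    (φ : EuclideanSpace ℝ (Fin n) → ℝ → ℝ)
    (u : ℕ → EuclideanSpace ℝ (Fin n) → ℝ≥0∞) : ℝ≥0∞ :=
  ⨆ (J : ℤ) (K : Fin n → ℤ),
    (ENNReal.ofReal (weightOn φ J K))⁻¹ *
      varNormR p (Set.indicator (dyadicCube J K) (fun x =>
        (∑' m : ℕ,
          (ENNReal.ofReal ((2 : ℝ) ^ ((((max J 0).toNat + m : ℕ) : ℝ) * s x)) *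
            u ((max J 0).toNat + m) x) ^ q x) ^ (1 / q x)))

/-!
Both embeddings are proved cube by cube, by comparing the modulars of the Luxemburg norm of
`(∑ₘ aₘ^q)^{1/q}` in `L^{p(·)}` and of the mixed `ℓ^{r(·)}(L^{p(·)})` norm of `(aₘ)`.

For `r = min(p, q)`, pick near-optimal parameters `μₘ` of the inner infima; halved, they are weights
`wₘ` with `∑ wₘ ≤ 1`. Pointwise, `(∑ₘ aₘ^q)^{p/q} ≤ ∑ₘ wₘ (aₘ / wₘ^{1/r})^p`: by subadditivity of
`t ↦ t^{p/q}` where `p ≤ q`, and by Jensen's inequality with the weights `wₘ` where `p > q`.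

For `r = max(p, q)`, let `T = (∑ₘ aₘ^q)^{1/q}` have modular at most one. The numbers
`μₘ = ∫ aₘ^q T^{p-q}` sum to `∫ T^p ≤ 1`, and after a fixed dilation each `μₘ` is admissible in the
inner infimum thanks to the pointwise bound `(b / μ^{1/r})^p ≤ μ⁻¹ b^q T^{p-q} + T^p` for `b ≤ T`.
-/

namespace ENNReal

theorem rpow_tsum_le_tsum_rpow {ι : Type*} (a : ι → ℝ≥0∞) {t : ℝ} (ht₀ : 0 < t) (ht₁ : t ≤ 1) :
    (∑' i, a i) ^ t ≤ ∑' i, a i ^ t := by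
  have hfin (F : Finset ι) : (∑ i ∈ F, a i) ^ t ≤ ∑ i ∈ F, a i ^ t := by
    induction F using Finset.cons_induction with
    | empty => simp [zero_rpow_of_pos ht₀]
    | cons i F _ ih =>
      rw [Finset.sum_cons, Finset.sum_cons]
      exact (rpow_add_le_add_rpow _ _ ht₀.le ht₁).trans (add_le_add_right ih _)
  rw [← le_rpow_inv_iff ht₀, ENNReal.tsum_eq_iSup_sum]
  exact iSup_le fun F => (le_rpow_inv_iff ht₀).2 ((hfin F).trans (ENNReal.sum_le_tsum F))

theorem rpow_tsum_mul_le_tsum_mul_rpow (w d : ℕ → ℝ≥0∞) {t : ℝ} (ht : 1 < t)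
    (hw : ∑' m, w m ≤ 1) : (∑' m, w m * d m) ^ t ≤ ∑' m, w m * d m ^ t := by
  have ht₀ : 0 < t := one_pos.trans ht
  set t' := t.conjExponent
  have hconj : t'.HolderConjugate t := (Real.HolderConjugate.conjExponent ht).symm
  have hsplit (m : ℕ) : w m * d m = w m ^ (1 / t') * (w m ^ (1 / t) * d m) := by
    rcases eq_or_ne (w m) 0 with h₀ | h₀
    · simp [h₀, ht₀]
    have hw_top : w m ≠ ∞ := ne_top_of_le_ne_top one_ne_top ((ENNReal.le_tsum m).trans hw)
    rw [← mul_assoc, ← rpow_add _ _ h₀ hw_top, one_div, one_div, hconj.inv_add_inv_eq_one,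
      rpow_one]
  have hholder := lintegral_mul_le_Lp_mul_Lq (Measure.count : Measure ℕ) hconj
    measurable_from_top.aemeasurable measurable_from_top.aemeasurable
    (f := fun m => w m ^ (1 / t')) (g := fun m => w m ^ (1 / t) * d m)
  simp only [lintegral_count] at hholder
  have hfirst : (∑' m, (w m ^ (1 / t')) ^ t') ^ (1 / t') ≤ 1 := by
    simp_rw [← rpow_mul, one_div, inv_mul_cancel₀ hconj.pos.ne', rpow_one]
    exact rpow_le_one hw (inv_pos.2 hconj.pos).le
  have hsecond (m : ℕ) : (w m ^ (1 / t) * d m) ^ t = w m * d m ^ t := by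
    rw [mul_rpow_of_nonneg _ _ ht₀.le, ← rpow_mul, one_div, inv_mul_cancel₀ ht₀.ne', rpow_one]
  rw [← le_rpow_inv_iff ht₀, ← one_div]
  calc ∑' m, w m * d m = ∑' m, w m ^ (1 / t') * (w m ^ (1 / t) * d m) := tsum_congr hsplit
    _ ≤ 1 * (∑' m, w m * d m ^ t) ^ (1 / t) := by
      simp only [hsecond] at hholder
      exact hholder.trans (mul_le_mul_left hfirst _)
    _ = _ := one_mul _

theorem rpow_eq_rpow_mul_rpow_sub {x : ℝ≥0∞} (hx₀ : x ≠ 0) (hx : x ≠ ∞) (p q : ℝ) :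
    x ^ p = x ^ q * x ^ (p - q) := by
  rw [← rpow_add _ _ hx₀ hx, add_sub_cancel]

theorem rpow_le_rpow_of_nonpos {x y : ℝ≥0∞} {z : ℝ} (hxy : x ≤ y) (hz : z ≤ 0) :
    y ^ z ≤ x ^ z := by
  simpa [rpow_neg] using ENNReal.inv_le_inv.2 (rpow_le_rpow hxy (neg_nonneg.2 hz))

theorem div_rpow_inv_max_rpow_le {b T μ : ℝ≥0∞} {p q : ℝ} (hp : 0 < p) (hq : 0 < q)
    (hbT : b ≤ T) (hT : T ≠ ∞) (hμ₀ : μ ≠ 0) (hμ : μ ≠ ∞) :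
    (b / μ ^ (1 / max p q)) ^ p ≤ μ⁻¹ * (b ^ q * T ^ (p - q)) + T ^ p := by
  have hb : b ≠ ∞ := ne_top_of_le_ne_top hT hbT
  have hdiv_rpow (r : ℝ) (hr : 0 < r) : (b / μ ^ (1 / r)) ^ r = μ⁻¹ * b ^ r := by
    rw [div_rpow_of_nonneg _ _ hr.le, ← rpow_mul, one_div_mul_cancel hr.ne', rpow_one,
      div_eq_mul_inv, mul_comm]
  rcases le_or_gt q p with hqp | hpq
  · rw [max_eq_left hqp, hdiv_rpow p hp]
    refine le_add_right (mul_le_mul_right ?_ _)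
    rcases eq_or_ne b 0 with rfl | hb₀
    · simp [zero_rpow_of_pos hp]
    rw [rpow_eq_rpow_mul_rpow_sub hb₀ hb p q]
    exact mul_le_mul_right (rpow_le_rpow hbT (sub_nonneg.2 hqp)) _
  rw [max_eq_right hpq.le]
  set y := b / μ ^ (1 / q)
  rcases le_or_gt y T with hyT | hTy
  · exact le_add_left (rpow_le_rpow hyT hp.le)
  have hy₀ : y ≠ 0 := (zero_le.trans_lt hTy).ne'
  have hy : y ≠ ∞ := div_ne_top hb (by simp [hμ₀, hμ])
  refine le_add_right ?_
  rw [rpow_eq_rpow_mul_rpow_sub hy₀ hy p q, hdiv_rpow q hq, mul_assoc]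
  exact mul_le_mul_right (mul_le_mul_right (rpow_le_rpow_of_nonpos hTy.le (by linarith)) _) _

theorem rpow_tsum_rpow_le_tsum_mul_div_rpow (b w : ℕ → ℝ≥0∞) {p q : ℝ} (hp : 0 < p)
    (hq : 0 < q) (hw₀ : ∀ m, w m ≠ 0) (hw : ∀ m, w m ≠ ∞) (hw_sum : ∑' m, w m ≤ 1) :
    (∑' m, b m ^ q) ^ (p / q) ≤ ∑' m, w m * (b m / w m ^ (1 / min p q)) ^ p := by
  set c := fun m => b m / w m ^ (1 / min p q)
  have hbc (m : ℕ) : b m = w m ^ (1 / min p q) * c m :=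
    (ENNReal.mul_div_cancel (by simp [hw₀ m, hw m]) (by simp [hw₀ m, hw m])).symm
  rcases le_or_gt p q with hpq | hqp
  · calc (∑' m, b m ^ q) ^ (p / q) ≤ ∑' m, (b m ^ q) ^ (p / q) :=
          rpow_tsum_le_tsum_rpow _ (div_pos hp hq) ((div_le_one hq).2 hpq)
      _ = ∑' m, w m * c m ^ p := tsum_congr fun m => by
          rw [← rpow_mul, mul_div_cancel₀ _ hq.ne', hbc m, mul_rpow_of_nonneg _ _ hp.le,
            ← rpow_mul, min_eq_left hpq, one_div_mul_cancel hp.ne', rpow_one]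
  · have hbq (m : ℕ) : b m ^ q = w m * c m ^ q := by
      rw [hbc m, mul_rpow_of_nonneg _ _ hq.le, ← rpow_mul, min_eq_right hqp.le,
        one_div_mul_cancel hq.ne', rpow_one]
    calc (∑' m, b m ^ q) ^ (p / q) = (∑' m, w m * c m ^ q) ^ (p / q) := by simp_rw [hbq]
      _ ≤ ∑' m, w m * (c m ^ q) ^ (p / q) :=
          rpow_tsum_mul_le_tsum_mul_rpow _ _ ((one_lt_div hq).2 hqp) hw_sum
      _ = ∑' m, w m * c m ^ p := tsum_congr fun m => by
          rw [← rpow_mul, mul_div_cancel₀ _ hq.ne']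

theorem le_mul_sInf {C N : ℝ≥0∞} {S : Set ℝ≥0∞} (hC₀ : C ≠ 0) (hC : C ≠ ∞)
    (h : ∀ l ∈ S, N ≤ C * l) : N ≤ C * sInf S := by
  rw [mul_comm, ← ENNReal.div_le_iff hC₀ hC]
  exact le_sInf fun l hl => (ENNReal.div_le_iff hC₀ hC).2 (mul_comm C l ▸ h l hl)

theorem iSup₂_mul_le_mul_iSup₂ {ι κ : Sort*} {c f g : ι → κ → ℝ≥0∞} (C : ℝ≥0∞)
    (h : ∀ i j, f i j ≤ C * g i j) : ⨆ i, ⨆ j, c i j * f i j ≤ C * ⨆ i, ⨆ j, c i j * g i j := by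
  simp_rw [ENNReal.mul_iSup]
  exact iSup₂_mono fun i j => (mul_le_mul_right (h i j) _).trans_eq (mul_left_comm _ _ _)

end ENNReal

def lqNorm (q : ℝ) (a : ℕ → ℝ≥0∞) : ℝ≥0∞ :=
  (∑' m, a m ^ q) ^ (1 / q)

theorem lqNorm_rpow (q p : ℝ) (a : ℕ → ℝ≥0∞) :
    lqNorm q a ^ p = (∑' m, a m ^ q) ^ (p / q) := by
  rw [lqNorm, ← ENNReal.rpow_mul, one_div_mul_eq_div]

theorem lqNorm_rpow_self {q : ℝ} (hq : q ≠ 0) (a : ℕ → ℝ≥0∞) :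
    lqNorm q a ^ q = ∑' m, a m ^ q := by
  rw [lqNorm_rpow, div_self hq, ENNReal.rpow_one]

theorem le_lqNorm {q : ℝ} (hq : 0 < q) (a : ℕ → ℝ≥0∞) (m : ℕ) : a m ≤ lqNorm q a := by
  rw [← ENNReal.rpow_le_rpow_iff hq, lqNorm_rpow_self hq.ne']
  exact ENNReal.le_tsum m

theorem lqNorm_div_const {q : ℝ} (hq : 0 < q) (a : ℕ → ℝ≥0∞) (c : ℝ≥0∞) :
    lqNorm q (fun m => a m / c) = lqNorm q a / c := by
  have hterm (m : ℕ) : (a m / c) ^ q = a m ^ q * (c ^ q)⁻¹ := by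
    rw [ENNReal.div_rpow_of_nonneg _ _ hq.le, div_eq_mul_inv]
  rw [lqNorm, lqNorm, tsum_congr hterm, ENNReal.tsum_mul_right,
    ENNReal.mul_rpow_of_nonneg _ _ (one_div_pos.2 hq).le, ENNReal.inv_rpow, ← ENNReal.rpow_mul,
    mul_one_div_cancel hq.ne', ENNReal.rpow_one]
  exact (div_eq_mul_inv _ _).symm

theorem indicator_lqNorm_eventuallyEq {α : Type*} {l : Filter α} {q : α → ℝ}
    (hq : ∀ᶠ x in l, 0 < q x) (S : Set α) (g : ℕ → α → ℝ≥0∞) :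
    S.indicator (fun x => lqNorm (q x) fun m => g m x)
      =ᶠ[l] fun x => lqNorm (q x) fun m => S.indicator (g m) x := by
  filter_upwards [hq] with x hqx
  by_cases hx : x ∈ S
  · simp [hx]
  · simp [hx, lqNorm, ENNReal.zero_rpow_of_pos hqx, ENNReal.zero_rpow_of_pos (inv_pos.2 hqx)]

theorem exists_pos_ae_le_of_essInf_pos {α : Type*} [MeasurableSpace α] {μ : Measure α}
    {f : α → ℝ} (hf : 0 < essInf f μ) : ∃ ε > 0, ∀ᵐ x ∂μ, ε ≤ f x := by
  rw [essInf, Filter.liminf_eq] at hf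
  by_cases hne : {a | ∀ᶠ x in ae μ, a ≤ f x}.Nonempty
  · obtain ⟨ε, hε, hε_pos⟩ := exists_lt_of_lt_csSup hne hf
    exact ⟨ε, hε_pos, hε⟩
  · -- otherwise `essInf f μ` is the junk value `sSup ∅ = 0`
    rw [Set.not_nonempty_iff_eq_empty.1 hne, Real.sSup_empty] at hf
    exact (lt_irrefl 0 hf).elim

theorem lintegral_tsum_mul_le {α : Type*} [MeasurableSpace α] {μ : Measure α}
    {F : ℕ → α → ℝ≥0∞} (hF : ∀ m, Measurable (F m)) {w : ℕ → ℝ≥0∞} (hw : ∑' m, w m ≤ 1)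
    {K : ℝ≥0∞} (hK : ∀ m, ∫⁻ x, F m x ∂μ ≤ K) : ∫⁻ x, ∑' m, w m * F m x ∂μ ≤ K := by
  rw [lintegral_tsum fun m => ((hF m).const_mul _).aemeasurable]
  simp_rw [lintegral_const_mul _ (hF _)]
  calc ∑' m, w m * ∫⁻ x, F m x ∂μ ≤ ∑' m, w m * K :=
        ENNReal.tsum_le_tsum fun m => mul_le_mul_right (hK m) _
    _ = (∑' m, w m) * K := ENNReal.tsum_mul_right
    _ ≤ K := mul_le_of_le_one_left zero_le hw

section VariableExponent

variable {n : ℕ} {p q : EuclideanSpace ℝ (Fin n) → ℝ}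

local notation "E" => EuclideanSpace ℝ (Fin n)

theorem varNormR_congr_ae {f g : E → ℝ≥0∞} (h : f =ᵐ[volume] g) :
    varNormR p f = varNormR p g := by
  have hmod (lam : ℝ≥0∞) :
      varModularR p (fun x => f x / lam) = varModularR p (fun x => g x / lam) :=
    lintegral_congr_ae (h.mono fun x hx => by simp only [hx])
  simp only [varNormR, hmod]

/-- Here `T` stands for the `ℓ^q`-norm of a whole sequence and `g` for one of its terms. -/
theorem mixedInnerR_max_div_le (hp : Measurable p) (hq : Measurable q) {ε : ℝ} (hε : 0 < ε)
    (hpε : ∀ᵐ x, ε ≤ p x) (hq₀ : ∀ᵐ x, 0 < q x) {g T : E → ℝ≥0∞} (hg : Measurable g)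
    (hT : Measurable T) (hgT : ∀ᵐ x, g x ≤ T x) (hT_fin : ∀ᵐ x, T x ≠ ∞)
    (hT_mod : ∫⁻ x, T x ^ p x ≤ 1) :
    mixedInnerR p (fun x => max (p x) (q x)) (fun x => g x / 2 ^ (1 / ε))
      ≤ ∫⁻ x, g x ^ q x * T x ^ (p x - q x) := by
  set δ : ℝ≥0∞ := 2 ^ (1 / ε)
  have hδ₁ : 1 ≤ δ := ENNReal.one_le_rpow one_le_two (by positivity)
  have hδε : δ ^ (-ε) = 2⁻¹ := by
    rw [← ENNReal.rpow_mul, one_div_mul_eq_div, neg_div, div_self hε.ne', ENNReal.rpow_neg_one]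
  refine le_of_forall_gt_imp_ge_of_dense fun c hc => ?_
  rcases eq_or_ne c ∞ with rfl | hc_top
  · exact le_top
  have hc₀ : c ≠ 0 := (zero_le.trans_lt hc).ne'
  refine sInf_le ⟨pos_iff_ne_zero.2 hc₀, ?_⟩
  have hpt : ∀ᵐ x, (g x / δ / c ^ (1 / max (p x) (q x))) ^ p x
      ≤ 2⁻¹ * (c⁻¹ * (g x ^ q x * T x ^ (p x - q x)) + T x ^ p x) := by
    filter_upwards [hpε, hq₀, hgT, hT_fin] with x hpx hqx hgTx hTx
    have hp₀ : 0 < p x := hε.trans_le hpx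
    rw [div_eq_mul_inv (g x), div_eq_mul_inv, mul_right_comm, ← div_eq_mul_inv (g x),
      ENNReal.mul_rpow_of_nonneg _ _ hp₀.le, mul_comm]
    refine mul_le_mul' ?_ (ENNReal.div_rpow_inv_max_rpow_le hp₀ hqx hgTx hTx hc₀ hc_top)
    rw [← hδε, ENNReal.inv_rpow, ← ENNReal.rpow_neg]
    exact ENNReal.rpow_le_rpow_of_exponent_le hδ₁ (neg_le_neg hpx)
  have hF : Measurable fun x => g x ^ q x * T x ^ (p x - q x) :=
    (hg.pow hq).mul (hT.pow (hp.sub hq))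
  calc varModularR p (fun x => g x / δ / c ^ (1 / max (p x) (q x)))
      ≤ ∫⁻ x, 2⁻¹ * (c⁻¹ * (g x ^ q x * T x ^ (p x - q x)) + T x ^ p x) :=
        lintegral_mono_ae hpt
    _ = 2⁻¹ * (c⁻¹ * (∫⁻ x, g x ^ q x * T x ^ (p x - q x)) + ∫⁻ x, T x ^ p x) := by
        rw [lintegral_const_mul' _ _ (by simp), lintegral_add_left (hF.const_mul _),
          lintegral_const_mul' _ _ (ENNReal.inv_ne_top.2 hc₀)]
    _ ≤ 2⁻¹ * (c⁻¹ * c + 1) :=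
        mul_le_mul_right (add_le_add (mul_le_mul_right hc.le _) hT_mod) _
    _ = 1 := by
        rw [ENNReal.inv_mul_cancel hc₀ hc_top, one_add_one_eq_two,
          ENNReal.inv_mul_cancel two_ne_zero ENNReal.ofNat_ne_top]

theorem mixedNormR_max_le_varNormR_lqNorm (hp : Measurable p) (hq : Measurable q) {ε : ℝ}
    (hε : 0 < ε) (hpε : ∀ᵐ x, ε ≤ p x) (hq₀ : ∀ᵐ x, 0 < q x) {a : ℕ → E → ℝ≥0∞}
    (ha : ∀ m, Measurable (a m)) :
    mixedNormR p (fun x => max (p x) (q x)) a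
      ≤ 2 ^ (1 / ε) * varNormR p (fun x => lqNorm (q x) fun m => a m x) := by
  set δ : ℝ≥0∞ := 2 ^ (1 / ε)
  have hδ₀ : δ ≠ 0 := (ENNReal.rpow_pos two_pos ENNReal.ofNat_ne_top).ne'
  have hδ : δ ≠ ∞ := ENNReal.rpow_ne_top_of_nonneg (by positivity) ENNReal.ofNat_ne_top
  refine ENNReal.le_mul_sInf hδ₀ hδ fun lam ⟨hlam₀, hlam_mod⟩ => ?_
  rcases eq_or_ne lam ∞ with rfl | hlam
  · simp [ENNReal.mul_top hδ₀]
  set b : ℕ → E → ℝ≥0∞ := fun m x => a m x / lam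
  set T : E → ℝ≥0∞ := fun x => lqNorm (q x) fun m => b m x
  have hT : Measurable T :=
    (Measurable.tsum fun m => ((ha m).div_const _).pow hq).pow (measurable_const.div hq)
  have hT_mod : ∫⁻ x, T x ^ p x ≤ 1 := by
    refine le_of_eq_of_le (lintegral_congr_ae ?_) hlam_mod
    filter_upwards [hq₀] with x hqx
    simp only [T, b, lqNorm_div_const hqx]
  have hT_fin : ∀ᵐ x, T x ≠ ∞ := by
    filter_upwards [ae_lt_top (hT.pow hp) (ne_top_of_le_ne_top ENNReal.one_ne_top hT_mod), hpε]
      with x hx hpx hTx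
    simp [hTx, ENNReal.top_rpow_of_pos (hε.trans_le hpx)] at hx
  have hμ_sum : ∑' m, ∫⁻ x, b m x ^ q x * T x ^ (p x - q x) ≤ 1 := by
    have hF (m : ℕ) : Measurable fun x => b m x ^ q x * T x ^ (p x - q x) :=
      (((ha m).div_const _).pow hq).mul (hT.pow (hp.sub hq))
    rw [← lintegral_tsum fun m => (hF m).aemeasurable]
    refine (lintegral_mono_ae ?_).trans hT_mod
    filter_upwards [hpε, hq₀, hT_fin] with x hpx hqx hTx
    rw [ENNReal.tsum_mul_right, ← lqNorm_rpow_self hqx.ne']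
    change T x ^ q x * T x ^ (p x - q x) ≤ T x ^ p x
    rcases eq_or_ne (T x) 0 with h₀ | h₀
    · simp [h₀, ENNReal.zero_rpow_of_pos hqx]
    · rw [← ENNReal.rpow_eq_rpow_mul_rpow_sub h₀ hTx]
  refine sInf_le ⟨ENNReal.mul_pos hδ₀ hlam₀.ne', ?_⟩
  calc mixedModularR p (fun x => max (p x) (q x)) (fun m x => a m x / (δ * lam))
      = ∑' m, mixedInnerR p (fun x => max (p x) (q x)) (fun x => b m x / δ) := by
        refine tsum_congr fun m => congrArg _ (funext fun x => ?_)
        simp only [b, div_eq_mul_inv]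
        rw [ENNReal.mul_inv (Or.inl hδ₀) (Or.inl hδ), mul_comm δ⁻¹, mul_assoc]
    _ ≤ ∑' m, ∫⁻ x, b m x ^ q x * T x ^ (p x - q x) :=
        ENNReal.tsum_le_tsum fun m => mixedInnerR_max_div_le hp hq hε hpε hq₀
          ((ha m).div_const _) hT (hq₀.mono fun x hqx => le_lqNorm hqx _ m) hT_fin hT_mod
    _ ≤ 1 := hμ_sum

theorem exists_weights_of_mixedModularR_le_one {r : E → ℝ} {g : ℕ → E → ℝ≥0∞}
    (hg : mixedModularR p r g ≤ 1) :
    ∃ w : ℕ → ℝ≥0∞, (∀ m, w m ≠ 0) ∧ ∑' m, w m ≤ 1 ∧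
      ∀ m, varModularR p (fun x => g m x / (2 * w m) ^ (1 / r x)) ≤ 1 := by
  obtain ⟨η, hη₀, hη⟩ := ENNReal.exists_pos_sum_of_countable one_ne_zero ℕ
  have hlt (m : ℕ) : mixedInnerR p r (g m) < mixedInnerR p r (g m) + η m :=
    ENNReal.lt_add_right (ne_top_of_le_ne_top ENNReal.one_ne_top ((ENNReal.le_tsum m).trans hg))
      (ENNReal.coe_ne_zero.2 (hη₀ m).ne')
  choose μ hμ hμ_lt using fun m => sInf_lt_iff.1 (hlt m)
  have hμ_sum : ∑' m, μ m ≤ 2 * 1 :=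
    calc ∑' m, μ m ≤ ∑' m, (mixedInnerR p r (g m) + η m) :=
          ENNReal.tsum_le_tsum fun m => (hμ_lt m).le
      _ = mixedModularR p r g + ∑' m, (η m : ℝ≥0∞) := ENNReal.tsum_add
      _ ≤ 1 + 1 := add_le_add hg hη.le
      _ = 2 * 1 := by norm_num
  refine ⟨fun m => μ m / 2, fun m => ?_, ?_, fun m => ?_⟩
  · exact (ENNReal.div_pos (hμ m).1.ne' ENNReal.ofNat_ne_top).ne'
  · simp_rw [div_eq_mul_inv]
    rw [ENNReal.tsum_mul_right, ← div_eq_mul_inv]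
    exact ENNReal.div_le_of_le_mul' hμ_sum
  · rw [ENNReal.mul_div_cancel two_ne_zero ENNReal.ofNat_ne_top]
    exact (hμ m).2

theorem exists_weights_of_mixedModularR_min_le_one {ε M : ℝ} (hε : 0 < ε)
    (hpε : ∀ᵐ x, ε ≤ p x) (hqε : ∀ᵐ x, ε ≤ q x) (hpM : ∀ᵐ x, p x ≤ M) {g : ℕ → E → ℝ≥0∞}
    (hg : mixedModularR p (fun x => min (p x) (q x)) g ≤ 1) :
    ∃ w : ℕ → ℝ≥0∞, (∀ m, w m ≠ 0) ∧ ∑' m, w m ≤ 1 ∧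
      ∀ m, varModularR p (fun x => g m x / w m ^ (1 / min (p x) (q x))) ≤ 2 ^ (M / ε) := by
  obtain ⟨w, hw₀, hw_sum, hw_mod⟩ := exists_weights_of_mixedModularR_le_one hg
  refine ⟨w, hw₀, hw_sum, fun m => ?_⟩
  have hpt : ∀ᵐ x, (g m x / w m ^ (1 / min (p x) (q x))) ^ p x
      ≤ 2 ^ (M / ε) * (g m x / (2 * w m) ^ (1 / min (p x) (q x))) ^ p x := by
    filter_upwards [hpε, hqε, hpM] with x hpx hqx hxM
    set r := min (p x) (q x)
    have hr : ε ≤ r := le_min hpx hqx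
    have hr₀ : 0 < r := hε.trans_le hr
    have h2₀ : (2 : ℝ≥0∞) ^ (1 / r) ≠ 0 := (ENNReal.rpow_pos two_pos ENNReal.ofNat_ne_top).ne'
    have h2 : (2 : ℝ≥0∞) ^ (1 / r) ≠ ∞ :=
      ENNReal.rpow_ne_top_of_nonneg (by positivity) ENNReal.ofNat_ne_top
    have hsplit : g m x / w m ^ (1 / r) = g m x / (2 * w m) ^ (1 / r) * 2 ^ (1 / r) :=
      calc g m x / w m ^ (1 / r) = g m x / w m ^ (1 / r) * ((2 ^ (1 / r))⁻¹ * 2 ^ (1 / r)) := by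
            rw [ENNReal.inv_mul_cancel h2₀ h2, mul_one]
        _ = g m x / (2 * w m) ^ (1 / r) * 2 ^ (1 / r) := by
            rw [ENNReal.mul_rpow_of_nonneg _ _ (by positivity), div_eq_mul_inv (g m x),
              div_eq_mul_inv (g m x), ENNReal.mul_inv (Or.inl h2₀) (Or.inl h2)]
            ring
    rw [hsplit, ENNReal.mul_rpow_of_nonneg _ _ (hε.trans_le hpx).le, ← ENNReal.rpow_mul, mul_comm]
    refine mul_le_mul' (ENNReal.rpow_le_rpow_of_exponent_le one_le_two ?_) le_rfl
    rw [one_div_mul_eq_div]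
    exact div_le_div₀ (by linarith) hxM hε hr
  calc varModularR p (fun x => g m x / w m ^ (1 / min (p x) (q x)))
      ≤ ∫⁻ x, 2 ^ (M / ε) * (g m x / (2 * w m) ^ (1 / min (p x) (q x))) ^ p x :=
        lintegral_mono_ae hpt
    _ = 2 ^ (M / ε) * varModularR p (fun x => g m x / (2 * w m) ^ (1 / min (p x) (q x))) :=
        lintegral_const_mul' _ _ (ENNReal.rpow_ne_top_of_nonneg' two_pos ENNReal.ofNat_ne_top)
    _ ≤ 2 ^ (M / ε) * 1 := mul_le_mul_right (hw_mod m) _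
    _ = 2 ^ (M / ε) := mul_one _

theorem varNormR_lqNorm_le_mixedNormR_min (hp : Measurable p) (hq : Measurable q) {ε M : ℝ}
    (hε : 0 < ε) (hpε : ∀ᵐ x, ε ≤ p x) (hqε : ∀ᵐ x, ε ≤ q x) (hpM : ∀ᵐ x, p x ≤ M)
    {a : ℕ → E → ℝ≥0∞} (ha : ∀ m, Measurable (a m)) :
    varNormR p (fun x => lqNorm (q x) fun m => a m x)
      ≤ 2 ^ (M / ε ^ 2) * mixedNormR p (fun x => min (p x) (q x)) a := by
  have hεM : ε ≤ M := by
    obtain ⟨x, hpx, hxM⟩ := (hpε.and hpM).exists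
    exact hpx.trans hxM
  have hM : 0 ≤ M := hε.le.trans hεM
  set K : ℝ≥0∞ := 2 ^ (M / ε)
  set C : ℝ≥0∞ := 2 ^ (M / ε ^ 2)
  have hK₀ : K ≠ 0 := (ENNReal.rpow_pos two_pos ENNReal.ofNat_ne_top).ne'
  have hK : K ≠ ∞ := ENNReal.rpow_ne_top_of_nonneg (div_nonneg hM hε.le) ENNReal.ofNat_ne_top
  have hC₀ : C ≠ 0 := (ENNReal.rpow_pos two_pos ENNReal.ofNat_ne_top).ne'
  have hC : C ≠ ∞ :=
    ENNReal.rpow_ne_top_of_nonneg (div_nonneg hM (sq_nonneg ε)) ENNReal.ofNat_ne_top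
  have hC₁ : 1 ≤ C := by
    simpa using ENNReal.rpow_le_rpow_of_exponent_le one_le_two (div_nonneg hM (sq_nonneg ε))
  have hCK : C ^ (-ε) = K⁻¹ := by
    rw [← ENNReal.rpow_mul, ← ENNReal.rpow_neg]
    congr 1
    field_simp
  refine ENNReal.le_mul_sInf hC₀ hC fun lam ⟨hlam₀, hlam_mod⟩ => ?_
  rcases eq_or_ne lam ∞ with rfl | hlam
  · simp [ENNReal.mul_top hC₀]
  obtain ⟨w, hw₀, hw_sum, hw_mod⟩ :=
    exists_weights_of_mixedModularR_min_le_one hε hpε hqε hpM hlam_mod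
  have hw (m : ℕ) : w m ≠ ∞ :=
    ne_top_of_le_ne_top ENNReal.one_ne_top ((ENNReal.le_tsum m).trans hw_sum)
  set F : ℕ → E → ℝ≥0∞ := fun m x => (a m x / lam / w m ^ (1 / min (p x) (q x))) ^ p x
  have hF (m : ℕ) : Measurable (F m) :=
    (((ha m).div_const _).div (measurable_const.pow (measurable_const.div (hp.min hq)))).pow hp
  have hpt : ∀ᵐ x, (lqNorm (q x) (fun m => a m x) / (C * lam)) ^ p x
      ≤ K⁻¹ * ∑' m, w m * F m x := by
    filter_upwards [hpε, hqε] with x hpx hqx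
    have hp₀ : 0 < p x := hε.trans_le hpx
    have hq₀ : 0 < q x := hε.trans_le hqx
    rw [div_eq_mul_inv (lqNorm _ _), ENNReal.mul_inv (Or.inl hC₀) (Or.inl hC), mul_comm C⁻¹,
      ← mul_assoc, ← div_eq_mul_inv _ lam, ← lqNorm_div_const hq₀,
      ENNReal.mul_rpow_of_nonneg _ _ hp₀.le, lqNorm_rpow, mul_comm]
    refine mul_le_mul' ?_ (ENNReal.rpow_tsum_rpow_le_tsum_mul_div_rpow _ w hp₀ hq₀ hw₀ hw hw_sum)
    rw [← hCK, ENNReal.inv_rpow, ← ENNReal.rpow_neg]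
    exact ENNReal.rpow_le_rpow_of_exponent_le hC₁ (neg_le_neg hpx)
  refine sInf_le ⟨ENNReal.mul_pos hC₀ hlam₀.ne', ?_⟩
  calc varModularR p (fun x => lqNorm (q x) (fun m => a m x) / (C * lam))
      ≤ ∫⁻ x, K⁻¹ * ∑' m, w m * F m x := lintegral_mono_ae hpt
    _ = K⁻¹ * ∫⁻ x, ∑' m, w m * F m x := lintegral_const_mul' _ _ (ENNReal.inv_ne_top.2 hK₀)
    _ ≤ K⁻¹ * K := mul_le_mul_right (lintegral_tsum_mul_le hF hw_sum hw_mod) _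
    _ = 1 := ENNReal.inv_mul_cancel hK₀ hK

end VariableExponent

section Localization

variable {n : ℕ}

local notation "E" => EuclideanSpace ℝ (Fin n)

theorem measurableSet_dyadicCube (j : ℤ) (k : Fin n → ℤ) : MeasurableSet (dyadicCube j k) := by
  have hcoord (i : Fin n) : Measurable fun x : E => x i :=
    (EuclideanSpace.proj (𝕜 := ℝ) i).continuous.measurable
  simp only [dyadicCube, Set.ofPred_forall, Set.ofPred_and]
  exact MeasurableSet.iInter fun i => (measurableSet_le measurable_const (hcoord i)).inter
    (measurableSet_lt (hcoord i) measurable_const)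

theorem measurable_lpConvFamily (φ₀ Φ : SchwartzMap E ℂ) {f : E → ℂ} (hf : Measurable f) (ℓ : ℕ) :
    Measurable (lpConvFamily φ₀ Φ f ℓ) := by
  have hker : Continuous (lpFamily φ₀ Φ ℓ) := by
    unfold lpFamily
    split_ifs
    · exact Φ.continuous
    · exact continuous_const.mul (φ₀.continuous.comp (continuous_const_smul _))
  have hprod : StronglyMeasurable fun z : E × E => lpFamily φ₀ Φ ℓ z.2 * f (z.1 - z.2) :=
    ((hker.measurable.comp measurable_snd).mul
      (hf.comp (measurable_fst.sub measurable_snd))).stronglyMeasurable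
  exact hprod.integral_prod_right'.measurable.nnnorm.coe_nnreal_ennreal

/-- The levels `2^{j s(·)} u_j χ_P`, `j = max(j_P, 0) + m`, of a family `u` localized to the
dyadic cube `P = Q_{JK}`. -/
def localizedLevels (s : E → ℝ) (u : ℕ → E → ℝ≥0∞) (J : ℤ) (K : Fin n → ℤ) (m : ℕ) :
    E → ℝ≥0∞ :=
  Set.indicator (dyadicCube J K) fun x =>
    ENNReal.ofReal ((2 : ℝ) ^ ((((max J 0).toNat + m : ℕ) : ℝ) * s x)) * u ((max J 0).toNat + m) x

theorem measurable_localizedLevels {s : E → ℝ} (hs : Measurable s) {u : ℕ → E → ℝ≥0∞}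
    (hu : ∀ m, Measurable (u m)) (J : ℤ) (K : Fin n → ℤ) (m : ℕ) :
    Measurable (localizedLevels s u J K m) :=
  (((measurable_const.pow (hs.const_mul _)).ennreal_ofReal).mul (hu _)).indicator
    (measurableSet_dyadicCube J K)

variable {p q s : EuclideanSpace ℝ (Fin n) → ℝ} {φ : EuclideanSpace ℝ (Fin n) → ℝ → ℝ}
  {u : ℕ → EuclideanSpace ℝ (Fin n) → ℝ≥0∞}

theorem besovNormFam_eq_iSup :
    besovNormFam p q s φ u
      = ⨆ (J : ℤ) (K : Fin n → ℤ),
          (ENNReal.ofReal (weightOn φ J K))⁻¹ * mixedNormR p q (localizedLevels s u J K) :=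
  rfl

theorem tlNormFam_eq_iSup (hq : ∀ᵐ x, 0 < q x) :
    tlNormFam p q s φ u
      = ⨆ (J : ℤ) (K : Fin n → ℤ), (ENNReal.ofReal (weightOn φ J K))⁻¹ *
          varNormR p (fun x => lqNorm (q x) fun m => localizedLevels s u J K m x) := by
  refine iSup_congr fun J => iSup_congr fun K => congrArg _ ?_
  exact varNormR_congr_ae (indicator_lqNorm_eventuallyEq hq _ _)

theorem tlNormFam_le_besovNormFam_min (hp : Measurable p) (hq : Measurable q)
    (hs : Measurable s) {ε M : ℝ} (hε : 0 < ε) (hpε : ∀ᵐ x, ε ≤ p x) (hqε : ∀ᵐ x, ε ≤ q x)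
    (hpM : ∀ᵐ x, p x ≤ M) (hu : ∀ m, Measurable (u m)) :
    tlNormFam p q s φ u ≤ 2 ^ (M / ε ^ 2) * besovNormFam p (fun x => min (p x) (q x)) s φ u := by
  rw [tlNormFam_eq_iSup (hqε.mono fun x hx => hε.trans_le hx), besovNormFam_eq_iSup]
  exact ENNReal.iSup₂_mul_le_mul_iSup₂ _ fun J K => varNormR_lqNorm_le_mixedNormR_min hp hq hε
    hpε hqε hpM (measurable_localizedLevels hs hu J K)

theorem besovNormFam_max_le_tlNormFam (hp : Measurable p) (hq : Measurable q)
    (hs : Measurable s) {ε : ℝ} (hε : 0 < ε) (hpε : ∀ᵐ x, ε ≤ p x) (hq₀ : ∀ᵐ x, 0 < q x)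
    (hu : ∀ m, Measurable (u m)) :
    besovNormFam p (fun x => max (p x) (q x)) s φ u ≤ 2 ^ (1 / ε) * tlNormFam p q s φ u := by
  rw [tlNormFam_eq_iSup hq₀, besovNormFam_eq_iSup]
  exact ENNReal.iSup₂_mul_le_mul_iSup₂ _ fun J K => mixedNormR_max_le_varNormR_lqNorm hp hq hε
    hpε hq₀ (measurable_localizedLevels hs hu J K)

end Localization

theorem besov_tl_embeddings_general {n : ℕ}
    (p q s : EuclideanSpace ℝ (Fin n) → ℝ)
    (hp_meas : Measurable p) (hq_meas : Measurable q) (hs_meas : Measurable s)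
    (hp_minus : 0 < essInf p (volume : Measure (EuclideanSpace ℝ (Fin n))))
    (hq_minus : 0 < essInf q (volume : Measure (EuclideanSpace ℝ (Fin n))))
    (hp_plus : ∃ M : ℝ, ∀ x, p x ≤ M)
    (φ : EuclideanSpace ℝ (Fin n) → ℝ → ℝ)
    (φ₀ Φ : SchwartzMap (EuclideanSpace ℝ (Fin n)) ℂ) :
    ∃ C : ℝ, 0 < C ∧ ∀ f : EuclideanSpace ℝ (Fin n) → ℂ, Measurable f →
      (tlNormFam p q s φ (lpConvFamily φ₀ Φ f)
          ≤ ENNReal.ofReal C *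
            besovNormFam p (fun x => min (p x) (q x)) s φ (lpConvFamily φ₀ Φ f)) ∧
      (besovNormFam p (fun x => max (p x) (q x)) s φ (lpConvFamily φ₀ Φ f)
          ≤ ENNReal.ofReal C * tlNormFam p q s φ (lpConvFamily φ₀ Φ f)) ∧
      (besovNormFam p p s φ (lpConvFamily φ₀ Φ f)
          ≤ ENNReal.ofReal C * tlNormFam p p s φ (lpConvFamily φ₀ Φ f)) ∧
      (tlNormFam p p s φ (lpConvFamily φ₀ Φ f)
          ≤ ENNReal.ofReal C * besovNormFam p p s φ (lpConvFamily φ₀ Φ f)) := by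
  obtain ⟨εp, hεp, hpεp⟩ := exists_pos_ae_le_of_essInf_pos hp_minus
  obtain ⟨εq, hεq, hqεq⟩ := exists_pos_ae_le_of_essInf_pos hq_minus
  obtain ⟨M, hpM⟩ := hp_plus
  set ε := min εp εq
  have hε : 0 < ε := lt_min hεp hεq
  have hpε : ∀ᵐ x, ε ≤ p x := hpεp.mono fun x hx => (min_le_left _ _).trans hx
  have hqε : ∀ᵐ x, ε ≤ q x := hqεq.mono fun x hx => (min_le_right _ _).trans hx
  have hp₀ : ∀ᵐ x, 0 < p x := hpε.mono fun x hx => hε.trans_le hx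
  have hq₀ : ∀ᵐ x, 0 < q x := hqε.mono fun x hx => hε.trans_le hx
  set C : ℝ := max (2 ^ (M / ε ^ 2)) (2 ^ (1 / ε))
  have hC (t : ℝ) (ht : (2 : ℝ) ^ t ≤ C) : (2 : ℝ≥0∞) ^ t ≤ ENNReal.ofReal C := by
    rw [← ENNReal.ofReal_ofNat 2, ENNReal.ofReal_rpow_of_pos two_pos]
    exact ENNReal.ofReal_le_ofReal ht
  have hCtl := hC _ (le_max_left _ _)
  have hCb := hC _ (le_max_right _ _)
  refine ⟨C, by positivity, fun f hf => ?_⟩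
  have hu := measurable_lpConvFamily φ₀ Φ hf
  have htl_pq := tlNormFam_le_besovNormFam_min (φ := φ) hp_meas hq_meas hs_meas hε hpε hqε
    (ae_of_all _ hpM) hu
  have htl_pp := tlNormFam_le_besovNormFam_min (φ := φ) hp_meas hp_meas hs_meas hε hpε hpε
    (ae_of_all _ hpM) hu
  have hb_pq := besovNormFam_max_le_tlNormFam (φ := φ) hp_meas hq_meas hs_meas hε hpε hq₀ hu
  have hb_pp := besovNormFam_max_le_tlNormFam (φ := φ) hp_meas hp_meas hs_meas hε hpε hp₀ hu
  simp only [min_self, max_self] at htl_pp hb_pp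
  exact ⟨htl_pq.trans (mul_le_mul_left hCtl _), hb_pq.trans (mul_le_mul_left hCb _),
    hb_pp.trans (mul_le_mul_left hCb _), htl_pp.trans (mul_le_mul_left hCtl _)⟩

/-- With `p₊ < ∞` and `q₊ < ∞`:
`B^{s(·),φ}_{p(·),min{p,q}(·)} ↪ F^{s(·),φ}_{p(·),q(·)} ↪ B^{s(·),φ}_{p(·),max{p,q}(·)}`;
in particular `B^{s(·),φ}_{p(·),p(·)} = F^{s(·),φ}_{p(·),p(·)}` with equivalent
quasi-norms. -/
theorem besov_tl_embeddings {n : ℕ}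
    (p q s : EuclideanSpace ℝ (Fin n) → ℝ)
    (hp_meas : Measurable p) (hq_meas : Measurable q) (hs_meas : Measurable s)
    (hp_log : GlobLogHolder p) (hq_log : GlobLogHolder q)
    (hp_minus : 0 < essInf p (volume : Measure (EuclideanSpace ℝ (Fin n))))
    (hq_minus : 0 < essInf q (volume : Measure (EuclideanSpace ℝ (Fin n))))
    (hp_plus : ∃ M : ℝ, ∀ x, p x ≤ M) (hq_plus : ∃ M : ℝ, ∀ x, q x ≤ M)
    (hs_log : ∃ C : ℝ, 0 < C ∧ LocLogHolderWith C s)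
    (hs_bdd : ∃ M : ℝ, ∀ x, |s x| ≤ M)
    (φ : EuclideanSpace ℝ (Fin n) → ℝ → ℝ) (c₁ c₂ : ℝ) (hφ : IsGWeight φ c₁ c₂)
    (φ₀ Φ : SchwartzMap (EuclideanSpace ℝ (Fin n)) ℂ) (hadm : AdmissiblePair φ₀ Φ) :
    ∃ C : ℝ, 0 < C ∧ ∀ f : EuclideanSpace ℝ (Fin n) → ℂ, Measurable f →
      (tlNormFam p q s φ (lpConvFamily φ₀ Φ f)
          ≤ ENNReal.ofReal C *
            besovNormFam p (fun x => min (p x) (q x)) s φ (lpConvFamily φ₀ Φ f)) ∧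
      (besovNormFam p (fun x => max (p x) (q x)) s φ (lpConvFamily φ₀ Φ f)
          ≤ ENNReal.ofReal C * tlNormFam p q s φ (lpConvFamily φ₀ Φ f)) ∧
      (besovNormFam p p s φ (lpConvFamily φ₀ Φ f)
          ≤ ENNReal.ofReal C * tlNormFam p p s φ (lpConvFamily φ₀ Φ f)) ∧
      (tlNormFam p p s φ (lpConvFamily φ₀ Φ f)
          ≤ ENNReal.ofReal C * besovNormFam p p s φ (lpConvFamily φ₀ Φ f)) :=
  besov_tl_embeddings_general p q s hp_meas hq_meas hs_meas hp_minus hq_minus hp_plus φ φ₀ Φ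
end
end

section
/- Let φ ∈ 𝒢(ℝⁿ×[0,∞)), p ∈ C^{log}(ℝⁿ), s, s₀, s₁ ∈ C^{log}_loc(ℝⁿ) ∩ L^∞(ℝⁿ), and q₀, q₁ ∈ C^{log}(ℝⁿ). (i) If q₀(x) ≤ q₁(x) for all x, then B^{s(·),φ}_{p(·),q₀(·)}(ℝⁿ) ↪ B^{s(·),φ}_{p(·),q₁(·)}(ℝⁿ). (ii) If ess inf (s₀ − s₁) > 0, then B^{s₀(·),φ}_{p(·),q₀(·)}(ℝⁿ) ↪ B^{s₁(·),φ}_{p(·),q₁(·)}(ℝⁿ). -/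
/-!
Both embeddings are proved cube by cube, for the mixed quasi-norm `ℓ^{q(·)}(L^{p(·)})`.

(i) A level `g` enters the mixed modular through
`inf {μ : ϱ_{p(·)}(g / μ^{1/q(·)}) ≤ 1}`. When this infimum is at most `1`, it can only
decrease as `q` grows, because `μ^{1/q₀} ≤ μ^{1/q₁}` for `μ ≤ 1`. Dividing by any `t > 1`
absorbs the boundary case where the infimum equals `1`, since `(t^a)^{1/q₀} ≤ t` when `a ≤ q₀`.

(ii) The gap `s₀ - s₁ ≥ ε` gives the level `m` above the cube an extra factor `2^{-εm}`.
With `a ≤ q₀, q₁`, after division by a fixed constant the `m`-th `q₁`-level has inner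
infimum at most `(1 - 2^{-εa}) 2^{-εam}`, and these sum to `1`.
-/

open MeasureTheory Real FourierTransform
open scoped ENNReal BigOperators Classical

noncomputable section

lemma ae_essInf_le_of_essInf_pos {α : Type*} [MeasurableSpace α] {μ : Measure α} {g : α → ℝ}
    (h : 0 < essInf g μ) : ∀ᵐ x ∂μ, essInf g μ ≤ g x := by
  refine ae_essInf_le ?_
  by_contra hg
  -- if `g` is not essentially bounded below, `essInf g μ` is the junk value `sSup ∅ = 0`
  have hempty : {a | ∀ᶠ x in ae μ, a ≤ g x} = ∅ :=
    Set.eq_empty_of_forall_notMem fun a ha => hg ⟨a, ha⟩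
  simp [essInf, Filter.liminf_eq, hempty] at h

namespace ENNReal

protected lemma div_div_of_ne_zero {a b c : ℝ≥0∞} (hb : b ≠ 0) (hc : c ≠ 0) :
    a / b / c = a / (b * c) := by
  rw [div_eq_mul_inv, div_eq_mul_inv, div_eq_mul_inv, ENNReal.mul_inv (Or.inl hb) (Or.inr hc),
    mul_assoc]

lemma div_div_le_div_of_le_mul {x x' θ b c d : ℝ≥0∞} (hx : x' ≤ θ * x) (hθ₀ : θ ≠ 0)
    (hθ : θ ≠ ⊤) (hb : b ≠ 0) (hc : c ≠ 0) (h : θ * d ≤ b * c) : x' / b / c ≤ x / d :=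
  calc x' / b / c = x' / (b * c) := ENNReal.div_div_of_ne_zero hb hc
    _ ≤ θ * x / (b * c) := ENNReal.div_le_div_right hx _
    _ ≤ θ * x / (θ * d) := ENNReal.div_le_div_left h _
    _ = x / d := ENNReal.mul_div_mul_left _ _ hθ₀ hθ

lemma tsum_ofReal_one_sub_mul_pow {r : ℝ} (hr₀ : 0 ≤ r) (hr₁ : r < 1) :
    ∑' m : ℕ, ENNReal.ofReal ((1 - r) * r ^ m) = 1 := by
  simp_rw [ENNReal.ofReal_mul (sub_nonneg.2 hr₁.le), ENNReal.ofReal_pow hr₀]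
  rw [ENNReal.tsum_mul_left, ENNReal.tsum_geometric, ENNReal.ofReal_sub _ hr₀,
    ENNReal.ofReal_one]
  exact ENNReal.mul_inv_cancel (tsub_pos_of_lt (ENNReal.ofReal_lt_one.2 hr₁)).ne' (by simp)

end ENNReal

lemma Real.le_rpow_rpow_one_div {a q y : ℝ} (ha : 0 < a) (haq : a ≤ q) (hy₀ : 0 < y)
    (hy₁ : y ≤ 1) : y ≤ (y ^ a) ^ (1 / q) :=
  calc y = y ^ (1 : ℝ) := (Real.rpow_one y).symm
    _ ≤ y ^ (a * (1 / q)) := Real.rpow_le_rpow_of_exponent_ge hy₀ hy₁ (by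
        rw [mul_one_div]; exact div_le_one_of_le₀ haq (ha.trans_le haq).le)
    _ = (y ^ a) ^ (1 / q) := Real.rpow_mul hy₀.le _ _

section MixedModular

variable {n : ℕ} {p q q₀ q₁ : EuclideanSpace ℝ (Fin n) → ℝ}

lemma varModularR_mono (hp : ∀ᵐ x, 0 ≤ p x) {f g : EuclideanSpace ℝ (Fin n) → ℝ≥0∞}
    (hfg : ∀ᵐ x, f x ≤ g x) : varModularR p f ≤ varModularR p g :=
  lintegral_mono_ae <| (hp.and hfg).mono fun _ hx => ENNReal.rpow_le_rpow hx.2 hx.1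

lemma mixedInnerR_le {g : EuclideanSpace ℝ (Fin n) → ℝ≥0∞} {μ : ℝ≥0∞} (hμ : 0 < μ)
    (h : varModularR p (fun x => g x / μ ^ (1 / q x)) ≤ 1) : mixedInnerR p q g ≤ μ :=
  sInf_le ⟨hμ, h⟩

lemma varModularR_div_rpow_le_one_of_mixedInnerR_lt (hp : ∀ᵐ x, 0 ≤ p x)
    (hq : ∀ᵐ x, 0 < q x) {g : EuclideanSpace ℝ (Fin n) → ℝ≥0∞} {ν : ℝ≥0∞}
    (h : mixedInnerR p q g < ν) : varModularR p (fun x => g x / ν ^ (1 / q x)) ≤ 1 := by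
  obtain ⟨μ, ⟨-, hμ⟩, hμν⟩ := sInf_lt_iff.mp h
  refine le_trans (varModularR_mono hp (hq.mono fun x hx => ?_)) hμ
  exact ENNReal.div_le_div_left (ENNReal.rpow_le_rpow hμν.le (by positivity)) _

lemma mixedInnerR_le_of_div_rpow_le (hp : ∀ᵐ x, 0 ≤ p x) (hq₀ : ∀ᵐ x, 0 < q₀ x)
    {g g' : EuclideanSpace ℝ (Fin n) → ℝ≥0∞} {μ ν : ℝ≥0∞} (hν : mixedInnerR p q₀ g < ν)
    (hμ : 0 < μ) (h : ∀ᵐ x, g' x / μ ^ (1 / q₁ x) ≤ g x / ν ^ (1 / q₀ x)) :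
    mixedInnerR p q₁ g' ≤ μ :=
  mixedInnerR_le hμ <|
    (varModularR_mono hp h).trans (varModularR_div_rpow_le_one_of_mixedInnerR_lt hp hq₀ hν)

lemma mixedInnerR_div_le_of_le {a : ℝ} (ha : 0 < a) (hp : ∀ᵐ x, 0 ≤ p x)
    (hq : ∀ᵐ x, a ≤ q₀ x ∧ q₀ x ≤ q₁ x) {g : EuclideanSpace ℝ (Fin n) → ℝ≥0∞} {t : ℝ≥0∞}
    (ht : 1 < t) (hg : mixedInnerR p q₀ g ≤ 1) :
    mixedInnerR p q₁ (fun x => g x / t) ≤ mixedInnerR p q₀ g := by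
  refine le_of_forall_gt_imp_ge_of_dense fun c hc => ?_
  have hta : 1 < t ^ a := ENNReal.one_lt_rpow ht ha
  have hc₀ : 0 < min c 1 := lt_min (pos_of_gt hc) one_pos
  refine (mixedInnerR_le_of_div_rpow_le hp (hq.mono fun x hx => ha.trans_le hx.1)
    (lt_min hc (hg.trans_lt hta)) hc₀ ?_).trans (min_le_left _ _)
  filter_upwards [hq] with x ⟨haq, hq₀₁⟩
  have hq₀ : 0 < q₀ x := ha.trans_le haq
  refine ENNReal.div_div_le_div_of_le_mul (one_mul _).ge one_ne_zero ENNReal.one_ne_top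
    (zero_lt_one.trans ht).ne'
    (ENNReal.rpow_pos hc₀ ((min_le_right c 1).trans_lt ENNReal.one_lt_top).ne).ne' ?_
  rw [one_mul]
  rcases le_or_gt c 1 with hc₁ | hc₁
  · rw [min_eq_left hc₁, min_eq_left (hc₁.trans hta.le)]
    calc c ^ (1 / q₀ x) ≤ c ^ (1 / q₁ x) :=
          ENNReal.rpow_le_rpow_of_exponent_ge hc₁ (one_div_le_one_div_of_le hq₀ hq₀₁)
      _ ≤ t * c ^ (1 / q₁ x) := le_mul_of_one_le_left' ht.le
  · rw [min_eq_right hc₁.le, ENNReal.one_rpow, mul_one]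
    -- the level `t ^ a` is admissible since `(t ^ a) ^ (1 / q₀) ≤ t` for `a ≤ q₀`
    calc min c (t ^ a) ^ (1 / q₀ x) ≤ (t ^ a) ^ (1 / q₀ x) :=
          ENNReal.rpow_le_rpow (min_le_right _ _) (by positivity)
      _ ≤ t ^ (1 : ℝ) := by
          rw [← ENNReal.rpow_mul, mul_one_div]
          exact ENNReal.rpow_le_rpow_of_exponent_le ht.le (div_le_one_of_le₀ haq hq₀.le)
      _ = t := ENNReal.rpow_one t

lemma mixedNormR_le_of_le {a : ℝ} (ha : 0 < a) (hp : ∀ᵐ x, 0 ≤ p x)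
    (hq : ∀ᵐ x, a ≤ q₀ x ∧ q₀ x ≤ q₁ x) (g : ℕ → EuclideanSpace ℝ (Fin n) → ℝ≥0∞) :
    mixedNormR p q₁ g ≤ mixedNormR p q₀ g := by
  refine le_sInf fun r ⟨hr, hmod⟩ => le_of_forall_gt_imp_ge_of_dense fun c hc => ?_
  refine sInf_le ⟨hr.trans hc, le_trans (ENNReal.tsum_le_tsum fun v => ?_) hmod⟩
  have ht : 1 < c / r := by
    rwa [ENNReal.lt_div_iff_mul_lt (Or.inl hr.ne') (Or.inl hc.ne_top), one_mul]
  have hgc : (fun x => g v x / c) = fun x => g v x / r / (c / r) := by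
    ext x
    rw [ENNReal.div_div_of_ne_zero hr.ne' (zero_lt_one.trans ht).ne',
      ENNReal.mul_div_cancel hr.ne' hc.ne_top]
  simp only [hgc]
  exact mixedInnerR_div_le_of_le ha hp hq ht ((ENNReal.le_tsum v).trans hmod)

lemma mixedInnerR_div_le_rpow {a y θ K : ℝ} (ha : 0 < a) (hp : ∀ᵐ x, 0 ≤ p x)
    (hq₀ : ∀ᵐ x, a ≤ q₀ x) (hq₁ : ∀ᵐ x, a ≤ q₁ x) (hy₀ : 0 < y) (hy₁ : y ≤ 1) (hθ : 0 < θ)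
    (hK : 2 ^ a⁻¹ * θ ≤ K * y) {g g' : EuclideanSpace ℝ (Fin n) → ℝ≥0∞}
    (hg : mixedInnerR p q₀ g ≤ 1) (hg' : ∀ x, g' x ≤ ENNReal.ofReal θ * g x) :
    mixedInnerR p q₁ (fun x => g' x / ENNReal.ofReal K) ≤ ENNReal.ofReal (y ^ a) := by
  have hK₀ : 0 < K := (mul_pos_iff_of_pos_right hy₀).1 (lt_of_lt_of_le (by positivity) hK)
  have hya : 0 < y ^ a := Real.rpow_pos_of_pos hy₀ a
  refine mixedInnerR_le_of_div_rpow_le hp (hq₀.mono fun x hx => ha.trans_le hx)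
    (ν := ENNReal.ofReal 2) (hg.trans_lt (by norm_num)) (ENNReal.ofReal_pos.2 hya) ?_
  filter_upwards [hq₀, hq₁] with x hq₀x hq₁x
  refine ENNReal.div_div_le_div_of_le_mul (hg' x) (by simpa using hθ) ENNReal.ofReal_ne_top
    (by simpa using hK₀) (ENNReal.rpow_pos (by simpa using hya) ENNReal.ofReal_ne_top).ne' ?_
  rw [ENNReal.ofReal_rpow_of_pos two_pos, ENNReal.ofReal_rpow_of_pos hya,
    ← ENNReal.ofReal_mul hθ.le, ← ENNReal.ofReal_mul hK₀.le]
  refine ENNReal.ofReal_le_ofReal ?_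
  calc θ * 2 ^ (1 / q₀ x) ≤ 2 ^ a⁻¹ * θ := by
        rw [mul_comm]
        gcongr
        · exact one_le_two
        · rw [one_div]; exact inv_anti₀ ha hq₀x
    _ ≤ K * y := hK
    _ ≤ K * (y ^ a) ^ (1 / q₁ x) :=
        mul_le_mul_of_nonneg_left (Real.le_rpow_rpow_one_div ha hq₁x hy₀ hy₁) hK₀.le

lemma exists_mixedNormR_le_of_le_pow_mul {a δ : ℝ} (ha : 0 < a) (hδ₀ : 0 < δ) (hδ₁ : δ < 1)
    (hp : ∀ᵐ x, 0 ≤ p x) (hq₀ : ∀ᵐ x, a ≤ q₀ x) (hq₁ : ∀ᵐ x, a ≤ q₁ x) :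
    ∃ C : ℝ, 0 < C ∧ ∀ g g' : ℕ → EuclideanSpace ℝ (Fin n) → ℝ≥0∞,
      (∀ m x, g' m x ≤ ENNReal.ofReal (δ ^ m) * g m x) →
        mixedNormR p q₁ g' ≤ ENNReal.ofReal C * mixedNormR p q₀ g := by
  have hδa : δ ^ a < 1 := Real.rpow_lt_one hδ₀.le hδ₁ ha
  set β := (1 - δ ^ a) ^ a⁻¹
  have hβ₀ : 0 < β := Real.rpow_pos_of_pos (sub_pos.2 hδa) _
  have hβ₁ : β ≤ 1 := Real.rpow_le_one (sub_nonneg.2 hδa.le)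
    (by linarith [Real.rpow_pos_of_pos hδ₀ a]) (inv_nonneg.2 ha.le)
  refine ⟨2 ^ a⁻¹ / β, by positivity, fun g g' hg => ?_⟩
  set C := ENNReal.ofReal (2 ^ a⁻¹ / β)
  have hC : C ≠ 0 := by simp only [C, ne_eq, ENNReal.ofReal_eq_zero, not_le]; positivity
  conv_rhs => rw [mixedNormR, sInf_eq_iInf', ENNReal.mul_iInf_of_ne hC ENNReal.ofReal_ne_top]
  refine le_iInf fun ⟨r, hr, hmod⟩ => sInf_le ⟨ENNReal.mul_pos hC hr.ne', ?_⟩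
  -- level `m` is allotted the share `(β δ ^ m) ^ a = (1 - δ ^ a) (δ ^ a) ^ m` of the modular
  calc mixedModularR p q₁ (fun m x => g' m x / (C * r))
      ≤ ∑' m : ℕ, ENNReal.ofReal ((1 - δ ^ a) * (δ ^ a) ^ m) :=
        ENNReal.tsum_le_tsum fun m => ?_
    _ = 1 := ENNReal.tsum_ofReal_one_sub_mul_pow (by positivity) hδa
  have hshare : (1 - δ ^ a) * (δ ^ a) ^ m = (β * δ ^ m) ^ a := by
    rw [Real.mul_rpow hβ₀.le (by positivity), Real.rpow_inv_rpow (sub_nonneg.2 hδa.le) ha.ne',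
      Real.rpow_pow_comm hδ₀.le]
  have hdiv : (fun x => g' m x / (C * r)) = fun x => g' m x / r / C :=
    funext fun x => by rw [ENNReal.div_div_of_ne_zero hr.ne' hC, mul_comm]
  simp only [hshare, hdiv]
  refine mixedInnerR_div_le_rpow ha hp hq₀ hq₁ (mul_pos hβ₀ (pow_pos hδ₀ m))
    (mul_le_one₀ hβ₁ (by positivity) (pow_le_one₀ hδ₀.le hδ₁.le)) (pow_pos hδ₀ m)
    (le_of_eq (by field_simp)) ((ENNReal.le_tsum m).trans hmod) fun x => ?_
  rw [← mul_div_assoc]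
  exact ENNReal.div_le_div_right (hg m x) r

end MixedModular

section BesovNorm

variable {n : ℕ} {p q₀ q₁ s₀ s₁ : EuclideanSpace ℝ (Fin n) → ℝ}
  {φ : EuclideanSpace ℝ (Fin n) → ℝ → ℝ} {u : ℕ → EuclideanSpace ℝ (Fin n) → ℝ≥0∞}

/-- The term `j = max(j_P, 0) + m` of `{2^{j s(·)} u_j χ_P}_{j ≥ max(j_P, 0)}`,
`P = Q_{JK}`. -/
def besovCubeSeq (s : EuclideanSpace ℝ (Fin n) → ℝ)
    (u : ℕ → EuclideanSpace ℝ (Fin n) → ℝ≥0∞) (J : ℤ) (K : Fin n → ℤ) (m : ℕ) :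
    EuclideanSpace ℝ (Fin n) → ℝ≥0∞ :=
  Set.indicator (dyadicCube J K) fun x =>
    ENNReal.ofReal ((2 : ℝ) ^ ((((max J 0).toNat + m : ℕ) : ℝ) * s x)) *
      u ((max J 0).toNat + m) x

lemma besovNormFam_eq (q s : EuclideanSpace ℝ (Fin n) → ℝ) :
    besovNormFam p q s φ u = ⨆ (J : ℤ) (K : Fin n → ℤ),
      (ENNReal.ofReal (weightOn φ J K))⁻¹ * mixedNormR p q (besovCubeSeq s u J K) :=
  rfl

lemma besovNormFam_le_mul {C : ℝ≥0∞}
    (h : ∀ J K, mixedNormR p q₁ (besovCubeSeq s₁ u J K) ≤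
      C * mixedNormR p q₀ (besovCubeSeq s₀ u J K)) :
    besovNormFam p q₁ s₁ φ u ≤ C * besovNormFam p q₀ s₀ φ u := by
  simp only [besovNormFam_eq, ENNReal.mul_iSup]
  refine iSup₂_mono fun J K => ?_
  rw [mul_left_comm]
  gcongr
  exact h J K

lemma besovCubeSeq_le_of_add_le {ε : ℝ} (hε : 0 ≤ ε) (hs : ∀ x, ε ≤ s₀ x - s₁ x) (J : ℤ)
    (K : Fin n → ℤ) (m : ℕ) (x : EuclideanSpace ℝ (Fin n)) :
    besovCubeSeq s₁ u J K m x ≤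
      ENNReal.ofReal (((2 : ℝ) ^ (-ε)) ^ m) * besovCubeSeq s₀ u J K m x := by
  by_cases hx : x ∈ dyadicCube J K
  · simp only [besovCubeSeq, Set.indicator_of_mem hx, ← mul_assoc]
    gcongr ?_ * _
    rw [← ENNReal.ofReal_mul (by positivity), ← Real.rpow_natCast,
      ← Real.rpow_mul zero_le_two, ← Real.rpow_add two_pos]
    refine ENNReal.ofReal_le_ofReal (Real.rpow_le_rpow_of_exponent_le one_le_two ?_)
    have hm : (m : ℝ) ≤ (((max J 0).toNat + m : ℕ) : ℝ) := by
      exact_mod_cast Nat.le_add_left m _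
    nlinarith [hs x, mul_le_mul_of_nonneg_left (hs x) ((m.cast_nonneg).trans hm)]
  · simp [besovCubeSeq, Set.indicator_of_notMem hx]

end BesovNorm

theorem besov_basic_embeddings_general {n : ℕ}
    (p q₀ q₁ s s₀ s₁ : EuclideanSpace ℝ (Fin n) → ℝ)
    (hp_minus : 0 < essInf p (volume : Measure (EuclideanSpace ℝ (Fin n))))
    (hq₀_minus : 0 < essInf q₀ (volume : Measure (EuclideanSpace ℝ (Fin n))))
    (hq₁_minus : 0 < essInf q₁ (volume : Measure (EuclideanSpace ℝ (Fin n))))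
    (φ : EuclideanSpace ℝ (Fin n) → ℝ → ℝ)
    (φ₀ Φ : SchwartzMap (EuclideanSpace ℝ (Fin n)) ℂ) :
    -- (i)
    ((∀ x, q₀ x ≤ q₁ x) →
      ∃ C : ℝ, 0 < C ∧ ∀ f : EuclideanSpace ℝ (Fin n) → ℂ, Measurable f →
        besovNormFam p q₁ s φ (lpConvFamily φ₀ Φ f)
          ≤ ENNReal.ofReal C * besovNormFam p q₀ s φ (lpConvFamily φ₀ Φ f)) ∧
    -- (ii)
    ((∃ ε : ℝ, 0 < ε ∧ ∀ x, ε ≤ s₀ x - s₁ x) →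
      ∃ C : ℝ, 0 < C ∧ ∀ f : EuclideanSpace ℝ (Fin n) → ℂ, Measurable f →
        besovNormFam p q₁ s₁ φ (lpConvFamily φ₀ Φ f)
          ≤ ENNReal.ofReal C * besovNormFam p q₀ s₀ φ (lpConvFamily φ₀ Φ f)) := by
  have hp : ∀ᵐ x, 0 ≤ p x :=
    (ae_essInf_le_of_essInf_pos hp_minus).mono fun _ hx => hp_minus.le.trans hx
  have hq₀ := ae_essInf_le_of_essInf_pos hq₀_minus
  have hq₁ := ae_essInf_le_of_essInf_pos hq₁_minus
  refine ⟨fun hq => ⟨1, one_pos, fun f _ => ?_⟩, fun ⟨ε, hε, hs⟩ => ?_⟩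
  · refine besovNormFam_le_mul fun J K => ?_
    rw [ENNReal.ofReal_one, one_mul]
    exact mixedNormR_le_of_le hq₀_minus hp (hq₀.mono fun x hx => ⟨hx, hq x⟩) _
  · obtain ⟨C, hC, hnorm⟩ := exists_mixedNormR_le_of_le_pow_mul (lt_min hq₀_minus hq₁_minus)
      (Real.rpow_pos_of_pos two_pos (-ε))
      (Real.rpow_lt_one_of_one_lt_of_neg one_lt_two (neg_neg_of_pos hε)) hp
      (hq₀.mono fun _ hx => (min_le_left _ _).trans hx)
      (hq₁.mono fun _ hx => (min_le_right _ _).trans hx)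
    exact ⟨C, hC, fun f _ => besovNormFam_le_mul fun J K =>
      hnorm _ _ (besovCubeSeq_le_of_add_le hε.le hs J K)⟩

/-- (i) If `q₀ ≤ q₁` pointwise then
`B^{s(·),φ}_{p(·),q₀(·)} ↪ B^{s(·),φ}_{p(·),q₁(·)}`.
(ii) If `ess inf (s₀ − s₁) > 0` then
`B^{s₀(·),φ}_{p(·),q₀(·)} ↪ B^{s₁(·),φ}_{p(·),q₁(·)}`. -/
theorem besov_basic_embeddings {n : ℕ}
    (p q₀ q₁ s s₀ s₁ : EuclideanSpace ℝ (Fin n) → ℝ)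
    (hp_meas : Measurable p) (hq₀_meas : Measurable q₀) (hq₁_meas : Measurable q₁)
    (hs_meas : Measurable s) (hs₀_meas : Measurable s₀) (hs₁_meas : Measurable s₁)
    (hp_log : GlobLogHolder p) (hq₀_log : GlobLogHolder q₀) (hq₁_log : GlobLogHolder q₁)
    (hp_minus : 0 < essInf p (volume : Measure (EuclideanSpace ℝ (Fin n))))
    (hq₀_minus : 0 < essInf q₀ (volume : Measure (EuclideanSpace ℝ (Fin n))))
    (hq₁_minus : 0 < essInf q₁ (volume : Measure (EuclideanSpace ℝ (Fin n))))
    (hs_log : ∃ C : ℝ, 0 < C ∧ LocLogHolderWith C s)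
    (hs₀_log : ∃ C : ℝ, 0 < C ∧ LocLogHolderWith C s₀)
    (hs₁_log : ∃ C : ℝ, 0 < C ∧ LocLogHolderWith C s₁)
    (hs_bdd : ∃ M : ℝ, ∀ x, |s x| ≤ M)
    (hs₀_bdd : ∃ M : ℝ, ∀ x, |s₀ x| ≤ M) (hs₁_bdd : ∃ M : ℝ, ∀ x, |s₁ x| ≤ M)
    (φ : EuclideanSpace ℝ (Fin n) → ℝ → ℝ) (c₁ c₂ : ℝ) (hφ : IsGWeight φ c₁ c₂)
    (φ₀ Φ : SchwartzMap (EuclideanSpace ℝ (Fin n)) ℂ) (hadm : AdmissiblePair φ₀ Φ) :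
    -- (i)
    ((∀ x, q₀ x ≤ q₁ x) →
      ∃ C : ℝ, 0 < C ∧ ∀ f : EuclideanSpace ℝ (Fin n) → ℂ, Measurable f →
        besovNormFam p q₁ s φ (lpConvFamily φ₀ Φ f)
          ≤ ENNReal.ofReal C * besovNormFam p q₀ s φ (lpConvFamily φ₀ Φ f)) ∧
    -- (ii)
    ((∃ ε : ℝ, 0 < ε ∧ ∀ x, ε ≤ s₀ x - s₁ x) →
      ∃ C : ℝ, 0 < C ∧ ∀ f : EuclideanSpace ℝ (Fin n) → ℂ, Measurable f →
        besovNormFam p q₁ s₁ φ (lpConvFamily φ₀ Φ f)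
          ≤ ENNReal.ofReal C * besovNormFam p q₀ s₀ φ (lpConvFamily φ₀ Φ f)) :=
  besov_basic_embeddings_general p q₀ q₁ s s₀ s₁ hp_minus hq₀_minus hq₁_minus φ φ₀ Φ
end
end
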